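/- Massart's finite class lemma: let S = {z_1,…,z_m} and let F be a finite set of functions f : Z → [0,1]. Then the Rademacher complexity satisfies E_σ[ sup_{f∈F} (2/m) ∑_{t=1}^m σ_t f(z_t) ] ≤ 2·√(2 log|F| / m), where σ_1,…,σ_m are i.i.d. uniform on {−1,1}. In particular, if additionally the values f(z_t) are bounded in [0,1], the bound √(2 log|F|/m) holds for the normalization (1/m)∑_t σ_t f(z_t) scaled appropriately. -/

import Mathlib

/-!
Chernoff's method. For `λ > 0`, Jensen's inequality for `exp` and the bound of a maximum of
positive numbers by their sum give
`exp (λ 𝔼 max_f ∑ₜ σₜ f(zₜ)) ≤ ∑_f 𝔼 exp (λ ∑ₜ σₜ f(zₜ))`. The signs are independent, so each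
expectation factors into `∏ₜ cosh (λ f(zₜ)) ≤ exp (λ² m / 2)` as `cosh x ≤ exp (x² / 2)`. Hence
`λ 𝔼 max ≤ log |F| + λ² m / 2` for every `λ > 0`, and optimizing in `λ` gives `√(2 m log |F|)`.
-/

open Finset Real

def boolSign (b : Bool) : ℝ := if b then 1 else -1

lemma sum_exp_mul_boolSign_mul_le (l c : ℝ) :
    ∑ b : Bool, exp (l * (boolSign b * c)) ≤ 2 * exp (l ^ 2 / 2 * c ^ 2) := by
  have h := cosh_le_exp_half_sq (l * c)
  rw [cosh_eq] at h
  simp only [Fintype.sum_bool, boolSign, if_true, Bool.false_eq_true, if_false]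
  calc exp (l * (1 * c)) + exp (l * (-1 * c)) = 2 * ((exp (l * c) + exp (-(l * c))) / 2) := by
        ring_nf
    _ ≤ 2 * exp (l ^ 2 / 2 * c ^ 2) := by
        rw [show l ^ 2 / 2 * c ^ 2 = (l * c) ^ 2 / 2 by ring]
        gcongr

lemma sum_exp_mul_sum_boolSign_le {ι : Type*} [Fintype ι] [DecidableEq ι] (l : ℝ) (a : ι → ℝ) :
    ∑ σ : ι → Bool, exp (l * ∑ t, boolSign (σ t) * a t) ≤
      2 ^ Fintype.card ι * exp (l ^ 2 / 2 * ∑ t, a t ^ 2) := by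
  calc ∑ σ : ι → Bool, exp (l * ∑ t, boolSign (σ t) * a t)
      = ∏ t, ∑ b : Bool, exp (l * (boolSign b * a t)) := by
        rw [Fintype.prod_sum]
        simp only [mul_sum, exp_sum]
    _ ≤ ∏ t, 2 * exp (l ^ 2 / 2 * a t ^ 2) :=
        prod_le_prod (fun _ _ => by positivity) fun t _ => sum_exp_mul_boolSign_mul_le l (a t)
    _ = 2 ^ Fintype.card ι * exp (l ^ 2 / 2 * ∑ t, a t ^ 2) := by
        rw [prod_mul_distrib, prod_const, card_univ, mul_sum, exp_sum]

lemma exp_average_le_average_exp {κ : Type*} [Fintype κ] [Nonempty κ] (g : κ → ℝ) :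
    exp ((Fintype.card κ : ℝ)⁻¹ * ∑ i, g i) ≤ (Fintype.card κ : ℝ)⁻¹ * ∑ i, exp (g i) := by
  have hw : ∑ _i : κ, (Fintype.card κ : ℝ)⁻¹ = 1 := by simp
  simpa only [mul_sum, smul_eq_mul] using
    convexOn_exp.map_sum_le (fun _ _ => by positivity) hw fun i _ => Set.mem_univ (g i)

lemma exp_sup'_le_sum_exp {α : Type*} (s : Finset α) (hs : s.Nonempty) (g : α → ℝ) :
    exp (s.sup' hs g) ≤ ∑ a ∈ s, exp (g a) := by
  obtain ⟨a, ha, hga⟩ := exists_mem_eq_sup' hs g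
  rw [hga]
  exact single_le_sum (fun _ _ => (exp_pos _).le) ha

lemma le_sqrt_of_forall_pos_mul_le {A a b : ℝ} (h : ∀ l > 0, l * A ≤ a + l ^ 2 / 2 * b) :
    A ≤ √(2 * a * b) := by
  rcases le_or_gt A 0 with hA | hA
  · exact hA.trans (sqrt_nonneg _)
  rcases le_or_gt b 0 with hb | hb
  · have := h ((|a| + 1) / A) (by positivity)
    rw [div_mul_cancel₀ _ hA.ne'] at this
    nlinarith [le_abs_self a, sq_nonneg ((|a| + 1) / A)]
  · have := h (A / b) (div_pos hA hb)
    rw [le_sqrt' hA]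
    field_simp at this
    nlinarith

theorem massart_finite_lemma {α ι : Type*} [Fintype ι] [DecidableEq ι] (s : Finset α) (hs : s.Nonempty)
    (x : α → ι → ℝ) {R : ℝ} (hR : ∀ a ∈ s, ∑ t, x a t ^ 2 ≤ R) :
    (2 ^ Fintype.card ι : ℝ)⁻¹ * ∑ σ : ι → Bool, s.sup' hs (fun a => ∑ t, boolSign (σ t) * x a t)
      ≤ √(2 * log #s * R) := by
  set G : (ι → Bool) → ℝ := fun σ => s.sup' hs fun a => ∑ t, boolSign (σ t) * x a t
  have hcard : (Fintype.card (ι → Bool) : ℝ) = 2 ^ Fintype.card ι := by simp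
  refine le_sqrt_of_forall_pos_mul_le fun l hl => ?_
  have hexp : exp (l * ((2 ^ Fintype.card ι : ℝ)⁻¹ * ∑ σ, G σ)) ≤ exp (log #s + l ^ 2 / 2 * R) :=
    calc exp (l * ((2 ^ Fintype.card ι : ℝ)⁻¹ * ∑ σ, G σ))
        = exp ((2 ^ Fintype.card ι : ℝ)⁻¹ * ∑ σ, l * G σ) := by rw [← mul_sum]; ring_nf
      _ ≤ (2 ^ Fintype.card ι : ℝ)⁻¹ * ∑ σ, exp (l * G σ) := by
        simpa only [hcard] using exp_average_le_average_exp fun σ => l * G σ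
      _ ≤ (2 ^ Fintype.card ι : ℝ)⁻¹ * ∑ σ : ι → Bool, ∑ a ∈ s,
            exp (l * ∑ t, boolSign (σ t) * x a t) := by
        gcongr with σ
        rw [mul₀_sup' hl.le]
        exact exp_sup'_le_sum_exp _ _ _
      _ = (2 ^ Fintype.card ι : ℝ)⁻¹ * ∑ a ∈ s, ∑ σ : ι → Bool,
            exp (l * ∑ t, boolSign (σ t) * x a t) := by rw [sum_comm]
      _ ≤ (2 ^ Fintype.card ι : ℝ)⁻¹ * ∑ _a ∈ s, 2 ^ Fintype.card ι * exp (l ^ 2 / 2 * R) := by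
        gcongr with a ha
        exact (sum_exp_mul_sum_boolSign_le l (x a)).trans (by gcongr; exact hR a ha)
      _ = exp (log #s + l ^ 2 / 2 * R) := by
        rw [sum_const, nsmul_eq_mul, exp_add, exp_log (by simpa using hs.card_pos)]
        field_simp
  linarith [exp_le_exp.mp hexp]

theorem massart_finite_class_general
    {Z : Type*} (m : ℕ) (S : Fin m → Z)
    (F : Finset (Z → ℝ)) (hF : F.Nonempty)
    (hb : ∀ f ∈ F, ∀ z, f z ∈ Set.Icc (0 : ℝ) 1) :
    (1 / 2 ^ m : ℝ) * ∑ σ : Fin m → Bool,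
        (F.sup' hF fun f => (2 / m : ℝ) * ∑ t, (if σ t then (1 : ℝ) else -1) * f (S t)) ≤
      2 * Real.sqrt (2 * Real.log F.card / m) := by
  have hR : ∀ f ∈ F, ∑ t, f (S t) ^ 2 ≤ m := fun f hf =>
    calc ∑ t, f (S t) ^ 2 ≤ ∑ _t : Fin m, (1 : ℝ) :=
          sum_le_sum fun t _ => pow_le_one₀ (hb f hf (S t)).1 (hb f hf (S t)).2
      _ = m := by simp
  have h := massart_finite_lemma F hF (fun f t => f (S t)) hR
  rw [Fintype.card_fin] at h
  simp_rw [← mul₀_sup' (by positivity : (0 : ℝ) ≤ 2 / m)]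
  rw [← mul_sum, mul_left_comm, one_div]
  calc 2 / (m : ℝ) * ((2 ^ m)⁻¹ * ∑ σ : Fin m → Bool,
          F.sup' hF fun f => ∑ t, (if σ t then (1 : ℝ) else -1) * f (S t))
      ≤ 2 / m * √(2 * log #F * m) := mul_le_mul_of_nonneg_left h (by positivity)
    _ = 2 * √(2 * log #F / m) := by
      rw [sqrt_mul' _ (Nat.cast_nonneg m), sqrt_div' _ (Nat.cast_nonneg m),
        show 2 / (m : ℝ) * (√(2 * log #F) * √m) = 2 * √(2 * log #F) * (√m / m) by ring,
        sqrt_div_self']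
      ring

/-- **Massart's finite class lemma.** For a finite nonempty class `F` of
functions into `[0,1]` and a fixed sample of `m` points, the empirical Rademacher
complexity (with the `2/m` normalization) is at most `2√(2 log |F| / m)`. -/
theorem massart_finite_class
    {Z : Type*} (m : ℕ) (hm : 0 < m) (S : Fin m → Z)
    (F : Finset (Z → ℝ)) (hF : F.Nonempty)
    (hb : ∀ f ∈ F, ∀ z, f z ∈ Set.Icc (0 : ℝ) 1) :
    (1 / 2 ^ m : ℝ) * ∑ σ : Fin m → Bool,
        (F.sup' hF fun f => (2 / m : ℝ) * ∑ t, (if σ t then (1 : ℝ) else -1) * f (S t)) ≤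
      2 * Real.sqrt (2 * Real.log F.card / m) :=
  massart_finite_class_general m S F hF hb
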